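/- Let v be a continuous vector field on the unit sphere S² = {x ∈ ℝ³ : ‖x‖ = 1} with ⟪v(x), x⟫ = 0 for every x ∈ S². Define w : B³ → ℝ³ on the closed unit ball by w(0) = 0 and w(x) = ‖x‖·v(x/‖x‖) + ‖x‖(1 − ‖x‖)·x for x ≠ 0. Then: (i) w is continuous on B³; (ii) w(x) = v(x) for every x with ‖x‖ = 1; (iii) for x ∈ B³, w(x) = 0 if and only if x = 0 or (‖x‖ = 1 and v(x) = 0). -/

import Mathlib

open Metric Filter Topology

/-! On each sphere `‖x‖ = r` the field `w` is the copy of `v` scaled by `r`, plus the radial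
term `r²(1 - r) • (x / r)`. Tangency of `v` makes the two parts orthogonal, so
`⟪w x, x⟫ = ‖x‖³ (1 - ‖x‖)`; hence `w` can only vanish at the centre or on the unit sphere,
where it equals `v`. Continuity at the centre comes from `‖‖x‖ • v (x / ‖x‖)‖ ≤ C ‖x‖`, with
`C` a bound of `v` on the compact sphere. -/

section Normed

variable {E : Type*} [NormedAddCommGroup E] [NormedSpace ℝ E]

/-- At `x = 0` both terms vanish, so this agrees with the paper's `w(0) = 0`. -/
noncomputable def radialExtension (v : E → E) (x : E) : E :=
  ‖x‖ • v (‖x‖⁻¹ • x) + (‖x‖ * (1 - ‖x‖)) • x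

@[simp]
theorem radialExtension_zero (v : E → E) : radialExtension v 0 = 0 := by
  simp [radialExtension]

theorem radialExtension_of_norm_eq_one {v : E → E} {x : E} (hx : ‖x‖ = 1) :
    radialExtension v x = v x := by
  simp [radialExtension, hx]

theorem continuous_norm_smul_comp_normalize {v : E → E} (hv : ContinuousOn v (sphere 0 1))
    {C : ℝ} (hC : ∀ y ∈ sphere (0 : E) 1, ‖v y‖ ≤ C) :
    Continuous fun x : E => ‖x‖ • v (‖x‖⁻¹ • x) := by
  refine continuous_iff_continuousAt.2 fun x => ?_
  rcases eq_or_ne x 0 with rfl | hx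
  · have hbound : ∀ y : E, ‖‖y‖ • v (‖y‖⁻¹ • y)‖ ≤ C * ‖y‖ := by
      intro y
      rcases eq_or_ne y 0 with rfl | hy
      · simp
      rw [norm_smul, norm_norm, mul_comm]
      gcongr
      exact hC _ (mem_sphere_zero_iff_norm.2 (norm_smul_inv_norm hy))
    have hlim : Tendsto (fun y : E => C * ‖y‖) (𝓝 0) (𝓝 0) := by
      simpa using (tendsto_norm_zero (E := E)).const_mul C
    simpa [ContinuousAt] using squeeze_zero_norm hbound hlim
  · have hnormalize : ContinuousOn (fun y : E => ‖y‖⁻¹ • y) {0}ᶜ :=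
      (continuousOn_id.norm.inv₀ fun y hy => norm_ne_zero_iff.2 hy).smul continuousOn_id
    have hcomp : ContinuousOn (fun y : E => v (‖y‖⁻¹ • y)) {0}ᶜ :=
      hv.comp hnormalize fun y hy => mem_sphere_zero_iff_norm.2 (norm_smul_inv_norm hy)
    exact continuous_norm.continuousAt.smul
      (hcomp.continuousAt (isOpen_compl_singleton.mem_nhds hx))

theorem continuous_radialExtension {v : E → E} (hv : ContinuousOn v (sphere 0 1))
    {C : ℝ} (hC : ∀ y ∈ sphere (0 : E) 1, ‖v y‖ ≤ C) :
    Continuous (radialExtension v) :=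
  (continuous_norm_smul_comp_normalize hv hC).add
    ((continuous_norm.mul (continuous_const.sub continuous_norm)).smul continuous_id)

end Normed

section Inner

variable {E : Type*} [NormedAddCommGroup E] [InnerProductSpace ℝ E]

theorem inner_radialExtension_self {v : E → E}
    (hv : ∀ y : E, ‖y‖ = 1 → inner ℝ (v y) y = (0 : ℝ)) (x : E) :
    inner ℝ (radialExtension v x) x = ‖x‖ ^ 3 * (1 - ‖x‖) := by
  rcases eq_or_ne x 0 with rfl | hx
  · simp
  have hu : ‖‖x‖⁻¹ • x‖ = 1 := norm_smul_inv_norm hx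
  have htan : inner ℝ (v (‖x‖⁻¹ • x)) x = (0 : ℝ) := by
    have hxu : x = ‖x‖ • (‖x‖⁻¹ • x) := by
      rw [smul_smul, mul_inv_cancel₀ (norm_ne_zero_iff.2 hx), one_smul]
    rw [hxu, real_inner_smul_right, ← hxu, hv _ hu, mul_zero]
  rw [radialExtension, inner_add_left, real_inner_smul_left, real_inner_smul_left,
    real_inner_self_eq_norm_sq, htan]
  ring

theorem radialExtension_eq_zero_iff {v : E → E}
    (hv : ∀ y : E, ‖y‖ = 1 → inner ℝ (v y) y = (0 : ℝ)) (x : E) :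
    radialExtension v x = 0 ↔ x = 0 ∨ (‖x‖ = 1 ∧ v x = 0) := by
  constructor
  · intro h
    have hpoly : ‖x‖ ^ 3 * (1 - ‖x‖) = 0 := by
      rw [← inner_radialExtension_self hv, h, inner_zero_left]
    rcases mul_eq_zero.1 hpoly with h0 | h1
    · exact Or.inl (norm_eq_zero.1 (pow_eq_zero_iff three_ne_zero |>.1 h0))
    · have hx : ‖x‖ = 1 := by linarith
      exact Or.inr ⟨hx, radialExtension_of_norm_eq_one (v := v) hx ▸ h⟩
  · rintro (rfl | ⟨hx, hvx⟩)
    · exact radialExtension_zero v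
    · rw [radialExtension_of_norm_eq_one hx, hvx]

end Inner

/-- **Explicit extension of sphere dynamics through the solid ball.**
Given a continuous tangent vector field `v` on the unit sphere `S² ⊆ ℝ³`, the field
`w(0) = 0`, `w(x) = ‖x‖ • v(x/‖x‖) + ‖x‖(1 - ‖x‖) • x` for `x ≠ 0`, is
(i) continuous on the closed unit ball, (ii) agrees with `v` on the sphere, and
(iii) vanishes at `x` in the ball iff `x = 0` or (`‖x‖ = 1` and `v x = 0`). -/
theorem explicit_extension_to_ball
    (v : EuclideanSpace ℝ (Fin 3) → EuclideanSpace ℝ (Fin 3))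
    (hv_cont : ContinuousOn v (sphere (0 : EuclideanSpace ℝ (Fin 3)) 1))
    (hv_tan : ∀ x : EuclideanSpace ℝ (Fin 3), ‖x‖ = 1 → inner ℝ (v x) x = (0 : ℝ))
    (w : EuclideanSpace ℝ (Fin 3) → EuclideanSpace ℝ (Fin 3))
    (hw0 : w 0 = 0)
    (hw : ∀ x : EuclideanSpace ℝ (Fin 3), x ≠ 0 →
      w x = ‖x‖ • v (‖x‖⁻¹ • x) + (‖x‖ * (1 - ‖x‖)) • x) :
    ContinuousOn w (closedBall (0 : EuclideanSpace ℝ (Fin 3)) 1) ∧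
    (∀ x : EuclideanSpace ℝ (Fin 3), ‖x‖ = 1 → w x = v x) ∧
    (∀ x : EuclideanSpace ℝ (Fin 3), ‖x‖ ≤ 1 →
      (w x = 0 ↔ x = 0 ∨ (‖x‖ = 1 ∧ v x = 0))) := by
  have hw_eq : w = radialExtension v := by
    funext x
    rcases eq_or_ne x 0 with rfl | hx
    · rw [hw0, radialExtension_zero]
    · exact hw x hx
  obtain ⟨C, hC⟩ := (isCompact_sphere (0 : EuclideanSpace ℝ (Fin 3)) 1).exists_bound_of_continuousOn
    hv_cont
  subst hw_eq
  exact ⟨(continuous_radialExtension hv_cont hC).continuousOn,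
    fun x hx => radialExtension_of_norm_eq_one hx,
    fun x _ => radialExtension_eq_zero_iff hv_tan x⟩
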